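/- arXiv:2110.14858 — 2 statements merged into one kernel-verified Lean document; each statement's English description precedes it below -/
import Mathlib

section
/- Let Σ = {a < b < c} be the ternary ordered alphabet, w ∈ Σ*, and p a positive integer. Then the Parikh matrix of the circular word [w^p] equals the p-th power of the Parikh matrix of [w]: Ψ_Σ([w^p]) = (Ψ_Σ([w]))^p. -/
/-!
The conjugates of `w^p` are the words `u^p` with `u` a conjugate of `w`, and distinct `u` give
distinct `u^p`; hence `Ψ([w^p])` is the average of `Ψ(u)^p` over `u ∈ [w]`.
All these `Ψ(u)` are unitriangular with the letter counts of `w` on the superdiagonal, so they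
differ from `Ψ(w)` by matrices supported on the entries `(i, j)` with `j ≥ i + 2`. In size at
most 4, i.e. for at most three letters, these matrices form a square-zero space `J` that is
stable under multiplication by upper triangular matrices, so `X ↦ X^p` is affine on `Ψ(w) + J`
and therefore commutes with averaging.
-/

/-- The number of occurrences of `v` as a scattered subword (subsequence) of `w`:
the number of strictly increasing sequences of positions in `w` spelling out `v`. -/
def subwordCount {α : Type*} [DecidableEq α] (w v : List α) : ℕ :=
  w.sublists.count v

/-- The conjugacy class (circular word) `[w]` of `w`: the set of all cyclic shifts of `w`. -/
def conjClass {α : Type*} [DecidableEq α] (w : List α) : Finset (List α) :=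
  insert w ((Finset.range w.length).image w.rotate)

/-- The average subword count of `v` in the circular word `[w]`:
`|[w]|_v = (1/|[w]|) ∑_{u ∈ [w]} |u|_v`. -/
def circCount {α : Type*} [DecidableEq α] (w v : List α) : ℚ :=
  (∑ u ∈ conjClass w, (subwordCount u v : ℚ)) / ((conjClass w).card : ℚ)

/-- The Parikh matrix of the letter `q` of the ordered alphabet `Fin s`:
the identity matrix with an extra `1` in entry `(q, q+1)`. -/
def parikhLetter {s : ℕ} (q : Fin s) : Matrix (Fin (s + 1)) (Fin (s + 1)) ℚ :=
  1 + Matrix.single q.castSucc q.succ 1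

/-- The Parikh matrix mapping over the ordered alphabet `Fin s` (a monoid morphism). -/
def parikhMatrix {s : ℕ} (w : List (Fin s)) : Matrix (Fin (s + 1)) (Fin (s + 1)) ℚ :=
  (w.map parikhLetter).prod

/-- The Parikh matrix of the circular word `[w]`:
`Ψ([w]) = (1/|[w]|) ∑_{u ∈ [w]} Ψ(u)`. -/
def circParikh {s : ℕ} (w : List (Fin s)) : Matrix (Fin (s + 1)) (Fin (s + 1)) ℚ :=
  (((conjClass w).card : ℚ))⁻¹ • ∑ u ∈ conjClass w, parikhMatrix u

/-- The alternate matrix: `(i,j)` entry is `(-1)^(i+j)` times the `(i,j)` entry of `A`. -/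
def altMatrix {n : ℕ} (A : Matrix (Fin n) (Fin n) ℚ) : Matrix (Fin n) (Fin n) ℚ :=
  Matrix.of fun i j => (-1 : ℚ) ^ (i.val + j.val) * A i j

/-- The word `a_i a_{i+1} ⋯ a_j` over the ordered alphabet `Fin s`. -/
def segWord {s : ℕ} (i j : Fin s) : List (Fin s) :=
  (List.range (j.val - i.val + 1)).attach.map fun t =>
    ⟨i.val + t.1, by
      have ht := List.mem_range.mp t.2
      have hi := i.isLt
      have hj := j.isLt
      omega⟩

open Matrix

namespace List

variable {α : Type*}

lemma flatten_replicate_append_comm (p : ℕ) (a b : List α) :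
    (replicate p (a ++ b)).flatten ++ a = a ++ (replicate p (b ++ a)).flatten := by
  induction p with
  | zero => simp
  | succ q ih => simp only [replicate_succ, flatten_cons, append_assoc, ih]

lemma rotate_length_flatten_replicate (p : ℕ) (a b : List α) :
    (replicate p (a ++ b)).flatten.rotate a.length = (replicate p (b ++ a)).flatten := by
  cases p with
  | zero => simp
  | succ q =>
    rw [replicate_succ, flatten_cons, append_assoc, rotate_append_length_eq, append_assoc,
      flatten_replicate_append_comm, replicate_succ, flatten_cons, append_assoc]

lemma rotate_flatten_replicate (p r : ℕ) (u : List α) :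
    (replicate p u).flatten.rotate r = (replicate p (u.rotate r)).flatten := by
  induction r with
  | zero => simp
  | succ r ih =>
    rw [← rotate_rotate _ r 1, ih, ← rotate_rotate u r 1]
    cases u.rotate r with
    | nil => simp
    | cons a t => simpa using rotate_length_flatten_replicate p [a] t

lemma flatten_replicate_injective {p : ℕ} (hp : p ≠ 0) :
    Function.Injective fun u : List α => (replicate p u).flatten := by
  intro u v huv
  have hlen : u.length = v.length := by
    simpa [hp] using congrArg length huv
  obtain ⟨q, rfl⟩ := Nat.exists_eq_succ_of_ne_zero hp
  simpa [replicate_succ, hlen] using congrArg (take v.length) huv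

end List

open List

lemma mem_conjClass {α : Type*} [DecidableEq α] {w u : List α} : u ∈ conjClass w ↔ w ~r u := by
  simp only [conjClass, Finset.mem_insert, Finset.mem_image, Finset.mem_range]
  constructor
  · rintro (rfl | ⟨r, -, rfl⟩)
    exacts [IsRotated.refl _, ⟨r, rfl⟩]
  · rintro ⟨r, rfl⟩
    by_cases hw : w = []
    · simp [hw]
    · exact Or.inr ⟨r % w.length, Nat.mod_lt _ (length_pos_iff.2 hw), rotate_mod w r⟩

lemma conjClass_flatten_replicate {α : Type*} [DecidableEq α] (w : List α) (p : ℕ) :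
    conjClass (replicate p w).flatten = (conjClass w).image fun u => (replicate p u).flatten := by
  ext u
  simp only [Finset.mem_image, mem_conjClass]
  constructor
  · rintro ⟨r, rfl⟩
    exact ⟨w.rotate r, ⟨r, rfl⟩, (rotate_flatten_replicate p r w).symm⟩
  · rintro ⟨_, ⟨r, rfl⟩, rfl⟩
    exact ⟨r, rotate_flatten_replicate p r w⟩

section Parikh

variable {s : ℕ}

lemma parikhMatrix_cons (q : Fin s) (u : List (Fin s)) :
    parikhMatrix (q :: u) = parikhLetter q * parikhMatrix u := by
  simp [parikhMatrix]

lemma parikhMatrix_flatten_replicate (p : ℕ) (u : List (Fin s)) :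
    parikhMatrix (replicate p u).flatten = parikhMatrix u ^ p := by
  simp [parikhMatrix, map_flatten, prod_flatten, prod_replicate]

lemma blockTriangular_parikhLetter (q : Fin s) : (parikhLetter q).BlockTriangular id :=
  blockTriangular_one.add (blockTriangular_single (Fin.castSucc_lt_succ (i := q)).le 1)

lemma blockTriangular_parikhMatrix (u : List (Fin s)) : (parikhMatrix u).BlockTriangular id :=
  prod_induction (BlockTriangular · id) (fun _ _ => BlockTriangular.mul)
    blockTriangular_one (by simpa using fun q _ => blockTriangular_parikhLetter q)

lemma parikhLetter_mul_apply (q : Fin s) (P : Matrix (Fin (s + 1)) (Fin (s + 1)) ℚ)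
    (i j : Fin (s + 1)) :
    (parikhLetter q * P) i j = P i j + if i = q.castSucc then P q.succ j else 0 := by
  rw [parikhLetter, add_mul, one_mul, Matrix.add_apply]
  split_ifs with hi
  · simp [hi]
  · rw [single_mul_apply_of_ne _ _ _ _ _ hi]

lemma parikhMatrix_apply_self (u : List (Fin s)) (i : Fin (s + 1)) : parikhMatrix u i i = 1 := by
  induction u with
  | nil => simp [parikhMatrix]
  | cons q u ih =>
    rw [parikhMatrix_cons, parikhLetter_mul_apply, ih, add_eq_left]
    split_ifs with hi
    · exact blockTriangular_parikhMatrix u (hi ▸ Fin.castSucc_lt_succ (i := q))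
    · rfl

lemma parikhMatrix_apply_castSucc_succ (u : List (Fin s)) (q : Fin s) :
    parikhMatrix u q.castSucc q.succ = u.count q := by
  induction u with
  | nil => simp [parikhMatrix, one_apply_ne (Fin.castSucc_lt_succ (i := q)).ne]
  | cons a u ih =>
    rw [parikhMatrix_cons, parikhLetter_mul_apply, ih, count_cons]
    by_cases h : a = q
    · subst h
      simp [parikhMatrix_apply_self]
    · simp [h, Ne.symm h]

end Parikh

section AboveSuperdiag

variable (R : Type*) [Semiring R] (n : ℕ)

def aboveSuperdiag : Submodule R (Matrix (Fin n) (Fin n) R) where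
  carrier := {E | ∀ i j : Fin n, (j : ℕ) < i + 2 → E i j = 0}
  add_mem' hE hF i j hij := by simp [hE i j hij, hF i j hij]
  zero_mem' _ _ _ := rfl
  smul_mem' c E hE i j hij := by simp [hE i j hij]

variable {R n}

lemma Matrix.BlockTriangular.mul_mem_aboveSuperdiag {A E : Matrix (Fin n) (Fin n) R}
    (hA : A.BlockTriangular id) (hE : E ∈ aboveSuperdiag R n) : A * E ∈ aboveSuperdiag R n := by
  intro i j hij
  refine (mul_apply).trans <| Finset.sum_eq_zero fun k _ => ?_
  by_cases hki : k < i
  · rw [hA hki, zero_mul]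
  · rw [hE k j (by rw [Fin.not_lt, Fin.le_def] at hki; omega), mul_zero]

lemma Matrix.BlockTriangular.mem_aboveSuperdiag_mul {A E : Matrix (Fin n) (Fin n) R}
    (hA : A.BlockTriangular id) (hE : E ∈ aboveSuperdiag R n) : E * A ∈ aboveSuperdiag R n := by
  intro i j hij
  refine (mul_apply).trans <| Finset.sum_eq_zero fun k _ => ?_
  by_cases hik : (k : ℕ) < i + 2
  · rw [hE i k hik, zero_mul]
  · rw [hA (show j < k by rw [Fin.lt_def]; omega), mul_zero]

lemma mul_eq_zero_of_mem_aboveSuperdiag (hn : n ≤ 4) {E F : Matrix (Fin n) (Fin n) R}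
    (hE : E ∈ aboveSuperdiag R n) (hF : F ∈ aboveSuperdiag R n) : E * F = 0 := by
  ext i j
  refine (mul_apply).trans <| Finset.sum_eq_zero fun k _ => ?_
  by_cases hik : (k : ℕ) < i + 2
  · rw [hE i k hik, zero_mul]
  · rw [hF k j (by omega), mul_zero]

end AboveSuperdiag

lemma parikhMatrix_sub_mem_aboveSuperdiag {s : ℕ} {u v : List (Fin s)} (huv : u ~ v) :
    parikhMatrix u - parikhMatrix v ∈ aboveSuperdiag ℚ (s + 1) := by
  intro i j hij
  rw [Matrix.sub_apply, sub_eq_zero]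
  obtain hji | rfl | hji : j < i ∨ j = i ∨ i < j := lt_trichotomy j i
  · rw [blockTriangular_parikhMatrix u hji, blockTriangular_parikhMatrix v hji]
  · rw [parikhMatrix_apply_self, parikhMatrix_apply_self]
  · obtain ⟨q, rfl, rfl⟩ : ∃ q : Fin s, i = q.castSucc ∧ j = q.succ :=
      ⟨⟨i, by omega⟩, rfl, by ext; simp; omega⟩
    rw [parikhMatrix_apply_castSucc_succ, parikhMatrix_apply_castSucc_succ, huv.count_eq]

section SquareZero

variable {K A : Type*} [Field K] [Ring A] [Algebra K A] (J : Submodule K A) {M : A}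

lemma exists_linearMap_add_pow (hMJ : ∀ E ∈ J, M * E ∈ J) (hJM : ∀ E ∈ J, E * M ∈ J)
    (hJJ : ∀ E ∈ J, ∀ F ∈ J, E * F = 0) (p : ℕ) :
    ∃ L : A →ₗ[K] A, ∀ E ∈ J, L E ∈ J ∧ (M + E) ^ p = M ^ p + L E := by
  have hpow_mul : ∀ k, ∀ E ∈ J, M ^ k * E ∈ J := by
    intro k E hE
    induction k with
    | zero => simpa using hE
    | succ k ih => simpa [pow_succ', mul_assoc] using hMJ _ ih
  induction p with
  | zero => exact ⟨0, fun E _ => ⟨J.zero_mem, by simp⟩⟩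
  | succ p ih =>
    obtain ⟨L, hL⟩ := ih
    refine ⟨LinearMap.mulLeft K (M ^ p) + LinearMap.mulRight K M ∘ₗ L, fun E hE => ?_⟩
    obtain ⟨hLE, hpow⟩ := hL E hE
    refine ⟨J.add_mem (hpow_mul p E hE) (hJM _ hLE), ?_⟩
    rw [pow_succ, hpow, add_mul, mul_add, mul_add, hJJ _ hLE _ hE, pow_succ]
    simp only [LinearMap.add_apply, LinearMap.comp_apply, LinearMap.mulLeft_apply,
      LinearMap.mulRight_apply]
    abel

theorem average_pow_of_sub_mem [CharZero K] (hMJ : ∀ E ∈ J, M * E ∈ J)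
    (hJM : ∀ E ∈ J, E * M ∈ J) (hJJ : ∀ E ∈ J, ∀ F ∈ J, E * F = 0)
    {ι : Type*} {S : Finset ι} (hS : S.Nonempty)
    {X : ι → A} (hX : ∀ i ∈ S, X i - M ∈ J) (p : ℕ) :
    (S.card : K)⁻¹ • ∑ i ∈ S, X i ^ p = ((S.card : K)⁻¹ • ∑ i ∈ S, X i) ^ p := by
  obtain ⟨L, hL⟩ := exists_linearMap_add_pow J hMJ hJM hJJ p
  have hcancel : ∀ Y : A, (S.card : K)⁻¹ • (S.card • Y) = Y := fun Y => by
    rw [← Nat.cast_smul_eq_nsmul K, smul_smul,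
      inv_mul_cancel₀ (Nat.cast_ne_zero.2 hS.card_pos.ne'), one_smul]
  set D := (S.card : K)⁻¹ • ∑ i ∈ S, (X i - M) with hD_def
  have hD : D ∈ J := J.smul_mem _ (J.sum_mem hX)
  have hmean : (S.card : K)⁻¹ • ∑ i ∈ S, X i = M + D := by
    rw [hD_def, Finset.sum_sub_distrib, Finset.sum_const, smul_sub, hcancel, add_sub_cancel]
  calc (S.card : K)⁻¹ • ∑ i ∈ S, X i ^ p
      = (S.card : K)⁻¹ • ∑ i ∈ S, (M ^ p + L (X i - M)) := by
        refine congrArg _ (Finset.sum_congr rfl fun i hi => ?_)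
        rw [← (hL _ (hX i hi)).2, add_sub_cancel]
    _ = M ^ p + L D := by
        rw [Finset.sum_add_distrib, Finset.sum_const, smul_add, hcancel, map_smul, map_sum]
    _ = ((S.card : K)⁻¹ • ∑ i ∈ S, X i) ^ p := by rw [hmean, (hL D hD).2]

end SquareZero

theorem circParikh_flatten_replicate {s : ℕ} (hs : s ≤ 3) (w : List (Fin s)) {p : ℕ}
    (hp : 0 < p) : circParikh (replicate p w).flatten = circParikh w ^ p := by
  have hinj := flatten_replicate_injective (α := Fin s) hp.ne'
  rw [circParikh, conjClass_flatten_replicate, Finset.card_image_of_injective _ hinj,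
    Finset.sum_image fun u _ v _ huv => hinj huv]
  simp only [parikhMatrix_flatten_replicate]
  refine average_pow_of_sub_mem (aboveSuperdiag ℚ (s + 1))
    (fun _ => (blockTriangular_parikhMatrix w).mul_mem_aboveSuperdiag)
    (fun _ => (blockTriangular_parikhMatrix w).mem_aboveSuperdiag_mul)
    (fun _ hE _ hF => mul_eq_zero_of_mem_aboveSuperdiag (by omega) hE hF)
    ⟨w, mem_conjClass.2 (IsRotated.refl w)⟩
    (fun u hu => parikhMatrix_sub_mem_aboveSuperdiag (mem_conjClass.1 hu).perm.symm) p

/-- Proposition 23 (ternary case): for a word `w` over `{a < b < c} = Fin 3` and a positive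
integer `p`, the Parikh matrix of the circular word `[w^p]` equals the `p`-th power of the
Parikh matrix of `[w]`. -/
theorem stmt_10 (w : List (Fin 3)) (p : ℕ) (hp : 0 < p) :
    circParikh ((List.replicate p w).flatten) = (circParikh w) ^ p :=
  circParikh_flatten_replicate le_rfl w hp
end

section
/- Let Σ = {a, b, c}, let α ∈ {a, c}, and suppose w = xαbybαz and w' = xbαyαbz for some x, y, z ∈ Σ*. Let ᾱ be the letter of Σ other than α and b. Then |w|_{abc} − |w'|_{abc} = |y|_ᾱ. -/
/-!
Expand both words along their factorisations into five blocks with the concatenation formula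
for `|uv|_{ijk}`. The blocks `αb` and `bα` have the same letters, so the two expansions differ
only in the terms where two consecutive letters of `abc` fall into one block: for `α = a` the
factor `|ab|_{ab} = 1` against the `c`'s of `y`, for `α = c` the `a`'s of `y` against
`|bc|_{bc} = 1`.
-/

section

variable {σ : Type*} [DecidableEq σ]

theorem subwordCount_cons (a : σ) (w v : List σ) :
    subwordCount (a :: w) v = subwordCount w v + (w.sublists.map (a :: ·)).count v := by
  unfold subwordCount
  rw [(List.sublists_cons_perm_append a w).count_eq, List.count_append]

@[simp]
theorem subwordCount_nil_right (w : List σ) : subwordCount w [] = 1 := by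
  induction w with
  | nil => rfl
  | cons a w ih => simp [subwordCount_cons, ih, List.count_eq_zero]

@[simp]
theorem subwordCount_nil_left (b : σ) (t : List σ) : subwordCount [] (b :: t) = 0 := by
  simp [subwordCount]

theorem subwordCount_cons_cons (a : σ) (w : List σ) (b : σ) (t : List σ) :
    subwordCount (a :: w) (b :: t) =
      subwordCount w (b :: t) + if b = a then subwordCount w t else 0 := by
  rw [subwordCount_cons]
  split_ifs with h
  · subst h
    rw [List.count_map_of_injective _ _ List.cons_injective]
    rfl
  · simp [List.count_eq_zero, Ne.symm h]

theorem subwordCount_singleton (w : List σ) (i : σ) : subwordCount w [i] = w.count i := by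
  induction w with
  | nil => rfl
  | cons a w ih =>
    rw [subwordCount_cons_cons, ih, subwordCount_nil_right, List.count_cons]
    rcases eq_or_ne i a with rfl | h
    · simp
    · simp [h, h.symm]

theorem subwordCount_append_pair (u w : List σ) (i j : σ) :
    subwordCount (u ++ w) [i, j] =
      subwordCount u [i, j] + u.count i * w.count j + subwordCount w [i, j] := by
  induction u with
  | nil => simp
  | cons a u ih =>
    simp only [List.cons_append, subwordCount_cons_cons, ih, List.count_cons,
      subwordCount_singleton, List.count_append, beq_iff_eq]
    rcases eq_or_ne i a with rfl | h
    · simp only [if_true]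
      ring
    · simp only [h, h.symm, if_false]
      ring

theorem subwordCount_append_triple (u w : List σ) (i j k : σ) :
    subwordCount (u ++ w) [i, j, k] =
      subwordCount u [i, j, k] + subwordCount u [i, j] * w.count k
        + u.count i * subwordCount w [j, k] + subwordCount w [i, j, k] := by
  induction u with
  | nil => simp
  | cons a u ih =>
    simp only [List.cons_append, subwordCount_cons_cons, ih, List.count_cons,
      subwordCount_append_pair, subwordCount_singleton, beq_iff_eq]
    rcases eq_or_ne i a with rfl | h
    · simp only [if_true]
      ring
    · simp only [h, h.symm, if_false]
      ring

end

/-- Lemma 34: over `{a, b, c} = Fin 3` (with `a = 0`, `b = 1`, `c = 2`), if `α ∈ {a, c}`,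
`w = xαbybαz`, `w' = xbαyαbz`, and `ᾱ` is the letter other than `α` and `b`, then
`|w|_{abc} − |w'|_{abc} = |y|_ᾱ`. -/
theorem stmt_17 (α : Fin 3) (hα : α = 0 ∨ α = 2) (x y z : List (Fin 3))
    (ᾱ : Fin 3) (hᾱ₁ : ᾱ ≠ α) (hᾱ₂ : ᾱ ≠ 1) :
    (subwordCount (x ++ [α, 1] ++ y ++ [1, α] ++ z) [0, 1, 2] : ℤ)
        - (subwordCount (x ++ [1, α] ++ y ++ [α, 1] ++ z) [0, 1, 2] : ℤ) =
      (y.count ᾱ : ℤ) := by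
  obtain ⟨rfl, rfl⟩ | ⟨rfl, rfl⟩ : α = 0 ∧ ᾱ = 2 ∨ α = 2 ∧ ᾱ = 0 := by omega
  all_goals
    simp only [List.append_assoc, List.cons_append, List.nil_append, subwordCount_append_triple,
      subwordCount_append_pair, subwordCount_cons_cons, subwordCount_singleton,
      List.count_append, List.count_cons, beq_iff_eq]
    norm_num
    ring
end
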